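/- arXiv:2205.03352 — 3 statements merged into one kernel-verified Lean document; each statement's English description precedes it below -/
import Mathlib

section
/- For any two vectors u, v in U^K (U a finite type), there exists a subset S of {1,...,K} and a bijection π on S such that v_k = u_{π(k)} for all k in S, and #S ≥ K − (#U − 1) · K · d(marg u, marg v), where marg w denotes the empirical distribution of the vector w and d is the total variation distance d(Q,Q') = Σ_{x∈U} max(Q(x) − Q'(x), 0). -/
open Finset

/-- Empirical marginal distribution of a vector. -/
noncomputable def marg {U : Type*} [Fintype U] [DecidableEq U] {K : ℕ} (w : Fin K → U) (x : U) : ℚ :=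
  ((Finset.univ.filter fun k => w k = x).card : ℚ) / K

/-- Positive-part total variation distance. -/
noncomputable def tv {U : Type*} [Fintype U] (Q Q' : U → ℚ) : ℚ :=
  ∑ x : U, max (Q x - Q' x) 0

section Dev
variable {U : Type*} [Fintype U] [DecidableEq U] {K : ℕ}

/-- count of fiber within a finset of indices -/
def cnt (w : Fin K → U) (A : Finset (Fin K)) (y : U) : ℕ :=
  (A.filter fun k => w k = y).card

def Dn (u v : Fin K → U) (A : Finset (Fin K)) : ℕ :=
  ∑ y : U, (cnt u A y - cnt v A y)

def IsPath (u v : Fin K → U) (y : U) : List (Fin K) → U → Prop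
  | [], x => x = y
  | (k :: P), x => v k = x ∧ IsPath u v y P (u k)

variable {u v : Fin K → U}

lemma isPath_count {y : U} : ∀ {P : List (Fin K)} {x : U}, IsPath u v y P x →
    ∀ z, (P.map v).count z + (if y = z then 1 else 0)
       = (P.map u).count z + (if x = z then 1 else 0) := by
  intro P
  induction P with
  | nil => intro x h z; cases h; rfl
  | cons k P ih =>
      intro x h z
      obtain ⟨hv, hp⟩ := h
      have := ih hp z
      simp only [List.map_cons, List.count_cons, hv]
      by_cases h1 : u k = z <;> by_cases h2 : x = z <;> simp [h1, h2] at this ⊢ <;> omega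

lemma isPath_append : ∀ {P Q : List (Fin K)} {y z x : U},
    IsPath u v z P x → IsPath u v y Q z → IsPath u v y (P ++ Q) x := by
  intro P
  induction P with
  | nil => intro Q y z x h1 h2; cases h1; exact h2
  | cons k P ih =>
      intro Q y z x h1 h2
      exact ⟨h1.1, ih h1.2 h2⟩

lemma isPath_split : ∀ {P Q : List (Fin K)} {y x : U},
    IsPath u v y (P ++ Q) x → ∃ z, IsPath u v z P x ∧ IsPath u v y Q z := by
  intro P
  induction P with
  | nil => intro Q y x h; exact ⟨x, rfl, h⟩
  | cons k P ih =>
      intro Q y x h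
      obtain ⟨z, h1, h2⟩ := ih h.2
      exact ⟨z, ⟨h.1, h1⟩, h2⟩

lemma cnt_toFinset {w : Fin K → U} {l : List (Fin K)} (h : l.Nodup) (y : U) :
    cnt w l.toFinset y = (l.map w).count y := by
  classical
  have h1 : (l.filter fun k => decide (w k = y)).toFinset
      = l.toFinset.filter (fun k => w k = y) := by
    rw [List.toFinset_filter]
    simp
  rw [cnt, ← h1, List.toFinset_card_of_nodup (h.filter _), List.count_eq_countP,
    List.countP_map, List.countP_eq_length_filter]
  rfl

lemma cnt_mono {w : Fin K → U} {A B : Finset (Fin K)} (h : B ⊆ A) (y : U) :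
    cnt w B y ≤ cnt w A y :=
  Finset.card_le_card (Finset.filter_subset_filter _ h)

lemma cnt_sdiff {w : Fin K → U} {A B : Finset (Fin K)} (h : B ⊆ A) (y : U) :
    cnt w (A \ B) y = cnt w A y - cnt w B y := by
  have : (A \ B).filter (fun k => w k = y)
      = A.filter (fun k => w k = y) \ B.filter (fun k => w k = y) := by
    ext k; simp only [mem_filter, mem_sdiff]; tauto
  rw [cnt, this, Finset.card_sdiff_of_subset (Finset.filter_subset_filter _ h)]; rfl

lemma sum_cnt (w : Fin K → U) (A : Finset (Fin K)) : ∑ y : U, cnt w A y = A.card :=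
  (Finset.card_eq_sum_card_fiberwise (fun x _ => Finset.mem_univ (w x))).symm

lemma Dn_lt {A B : Finset (Fin K)} (hBA : B ⊆ A) {x₀ x' : U} (hne : x₀ ≠ x')
    (hid : ∀ y, cnt v B y + (if x₀ = y then 1 else 0) = cnt u B y + (if x' = y then 1 else 0))
    (h0 : cnt v A x₀ < cnt u A x₀) (h1 : cnt u A x' < cnt v A x') :
    Dn u v (A \ B) < Dn u v A := by
  apply Finset.sum_lt_sum
  · intro y _
    rw [cnt_sdiff hBA, cnt_sdiff hBA]
    have hu := cnt_mono hBA (w := u) y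
    have hv := cnt_mono hBA (w := v) y
    have := hid y
    by_cases hy0 : x₀ = y <;> by_cases hy1 : x' = y <;>
      simp only [hy0, hy1, if_pos, if_neg, if_true, if_false] at this <;>
      first
        | omega
        | (subst hy0; subst hy1; omega)
        | (try subst hy0); (try subst hy1); omega
  · refine ⟨x₀, Finset.mem_univ _, ?_⟩
    rw [cnt_sdiff hBA, cnt_sdiff hBA]
    have hu := cnt_mono hBA (w := u) x₀
    have hv := cnt_mono hBA (w := v) x₀
    have h2 := hid x₀
    rw [if_pos rfl, if_neg (Ne.symm hne)] at h2
    omega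

lemma Dn_sdiff_balanced {A C : Finset (Fin K)} (hCA : C ⊆ A)
    (hbal : ∀ y, cnt u C y = cnt v C y) : Dn u v (A \ C) = Dn u v A := by
  apply Finset.sum_congr rfl
  intro y _
  rw [cnt_sdiff hCA, cnt_sdiff hCA]
  have hu := cnt_mono hCA (w := u) y
  have hv := cnt_mono hCA (w := v) y
  have := hbal y
  omega

lemma walk (A : Finset (Fin K)) (x₀ : U) (hx₀ : cnt v A x₀ < cnt u A x₀) :
    ∀ fuel : ℕ, ∀ P : List (Fin K), ∀ x : U,
    Fintype.card U ≤ fuel + P.length →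
    P.Nodup → (∀ k ∈ P, k ∈ A) → (P.map u).Nodup → x ∉ P.map u →
    IsPath u v x₀ P x → cnt v A x ≤ cnt u A x →
    (∀ y ∈ P.map u, cnt v A y ≤ cnt u A y) →
    (∃ B ⊆ A, B.card + 1 ≤ Fintype.card U ∧ Dn u v (A \ B) < Dn u v A) ∨
    (∃ C ⊆ A, C.Nonempty ∧ ∀ y, cnt u C y = cnt v C y) := by
  intro fuel
  induction fuel with
  | zero =>
      intro P x hfuel _ _ hnodup hxP _ _ _
      exfalso
      have : (x :: P.map u).Nodup := List.nodup_cons.2 ⟨hxP, hnodup⟩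
      have := this.length_le_card
      simp at this
      omega
  | succ fuel ih =>
      intro P x hfuel hPnd hPA hund hxP hpath hx hvis
      -- find an outgoing edge k from x
      have hx1 : 1 ≤ cnt u A x := by
        rcases eq_or_ne x x₀ with h | hne
        · rw [h]; omega
        · -- x ∈ P.map v
          have hc := isPath_count hpath x
          rw [if_neg (Ne.symm hne), if_pos rfl] at hc
          have hcu : (P.map u).count x = 0 := by
            rw [List.count_eq_zero]; exact hxP
          have hxv : x ∈ P.map v := by
            rw [← List.count_pos_iff]; omega
          obtain ⟨j, hjP, hjv⟩ := List.mem_map.1 hxv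
          have : 1 ≤ cnt v A x := by
            rw [cnt]
            exact Finset.card_pos.2 ⟨j, Finset.mem_filter.2 ⟨hPA j hjP, hjv⟩⟩
          omega
      obtain ⟨k, hk⟩ := Finset.card_pos.1 (show 0 < (A.filter fun k => u k = x).card by
        unfold cnt at hx1; omega)
      obtain ⟨hkA, hku⟩ := Finset.mem_filter.1 hk
      have hkP : k ∉ P := fun hkP => hxP (List.mem_map.2 ⟨k, hkP, hku⟩)
      set x' := v k with hx'
      have hpath' : IsPath u v x₀ (k :: P) x' := ⟨rfl, hku ▸ hpath⟩
      by_cases hdef : cnt u A x' < cnt v A x'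
      · -- found augmenting path, case (a)
        left
        have hnd' : (k :: P).Nodup := List.nodup_cons.2 ⟨hkP, hPnd⟩
        refine ⟨(k :: P).toFinset, ?_, ?_, ?_⟩
        · intro j hj
          rcases List.mem_cons.1 (List.mem_toFinset.1 hj) with h | h
          · exact h ▸ hkA
          · exact hPA j (by simpa using h)
        · -- card bound
          have hxx' : x' ≠ x := fun h => by rw [h] at hdef; omega
          have hx'P : x' ∉ P.map u := fun h => by have := hvis x' h; omega
          have hnodL : (x' :: x :: P.map u).Nodup := by
            refine List.nodup_cons.2 ⟨?_, List.nodup_cons.2 ⟨hxP, hund⟩⟩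
            simp only [List.mem_cons]
            rintro (h | h)
            · exact hxx' h
            · exact hx'P h
          have hlen := hnodL.length_le_card
          simp only [List.length_cons, List.length_map] at hlen
          rw [List.toFinset_card_of_nodup hnd']
          simp only [List.length_cons]
          omega
        · -- Dn decreases
          have hne : x₀ ≠ x' := fun h => by rw [← h] at hdef; omega
          apply Dn_lt (B := (k :: P).toFinset) _ hne _ hx₀ hdef
          · intro j hj
            rcases List.mem_cons.1 (List.mem_toFinset.1 hj) with h | h
            · exact h ▸ hkA
            · exact hPA j (by simpa using h)
          · intro y
            have hnd' : (k :: P).Nodup := List.nodup_cons.2 ⟨hkP, hPnd⟩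
            rw [cnt_toFinset hnd', cnt_toFinset hnd']
            exact isPath_count hpath' y
      · push_neg at hdef
        by_cases hcyc : x' ∈ x :: P.map u
        · -- cycle found, case (b)
          right
          rcases List.mem_cons.1 hcyc with h | h
          · -- self loop x' = x : C = {k}
            refine ⟨{k}, Finset.singleton_subset_iff.2 hkA, ⟨k, Finset.mem_singleton_self k⟩, ?_⟩
            intro y
            rw [cnt, cnt, Finset.filter_singleton, Finset.filter_singleton]
            rw [hku, show v k = x from h]
          · -- x' = u j for some j ∈ P
            obtain ⟨j, hjP, hju⟩ := List.mem_map.1 h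
            obtain ⟨P₁, P₂, hPeq⟩ := List.append_of_mem hjP
            rw [hPeq] at hpath hPnd
            obtain ⟨z, hz1, hz2⟩ := isPath_split hpath
            have hjz : v j = z := hz2.1
            -- cycle list
            set L : List (Fin K) := k :: (P₁ ++ [j]) with hL
            have hLsubP : ∀ a ∈ P₁ ++ [j], a ∈ P := by
              intro a ha
              rw [hPeq]
              rcases List.mem_append.1 ha with h' | h'
              · exact List.mem_append.2 (Or.inl h')
              · simp at h'; subst h'; exact List.mem_append.2 (Or.inr List.mem_cons_self)
            have hLnd : L.Nodup := by
              refine List.nodup_cons.2 ⟨fun hc => hkP (hLsubP _ hc), ?_⟩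
              have h1 : P₁.Nodup := (List.nodup_append.1 hPnd).1
              have h2 : j ∉ P₁ := by
                intro hc
                have := List.nodup_append.1 hPnd
                exact this.2.2 _ hc _ List.mem_cons_self rfl
              simp [List.nodup_append, h1, h2]
              intro a ha haj; exact h2 (haj ▸ ha)
            have hLpath : IsPath u v x' L x' := by
              refine ⟨rfl, ?_⟩
              rw [hku]
              exact isPath_append hz1 ⟨hjz, hju⟩
            refine ⟨L.toFinset, ?_, ⟨k, List.mem_toFinset.2 List.mem_cons_self⟩, ?_⟩
            · intro a ha
              rcases List.mem_cons.1 (List.mem_toFinset.1 ha) with h' | h'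
              · exact h' ▸ hkA
              · exact hPA a (hLsubP a (by simpa using h'))
            · intro y
              rw [cnt_toFinset hLnd, cnt_toFinset hLnd]
              have := isPath_count hLpath y
              omega
        · -- continue walking
          refine ih (k :: P) x' (show Fintype.card U ≤ fuel + (k :: P).length by
              simp only [List.length_cons]; omega)
            (List.nodup_cons.2 ⟨hkP, hPnd⟩)
            (fun j hj => (List.mem_cons.1 hj).elim (fun h => h ▸ hkA) (hPA j))
            (by rw [List.map_cons, hku]; exact List.nodup_cons.2 ⟨hxP, hund⟩)
            (by rw [List.map_cons, hku]; exact hcyc)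
            hpath' hdef ?_
          intro y hy
          rw [List.map_cons, hku] at hy
          rcases List.mem_cons.1 hy with h | h
          · exact h ▸ hx
          · exact hvis y h

lemma main_lemma (hU : 1 ≤ Fintype.card U) :
    ∀ n : ℕ, ∀ A : Finset (Fin K), A.card ≤ n →
    ∃ S ⊆ A, (∀ y, cnt u S y = cnt v S y) ∧
      A.card ≤ S.card + (Fintype.card U - 1) * Dn u v A := by
  intro n
  induction n with
  | zero =>
      intro A hA
      have hAe : A = ∅ := Finset.card_eq_zero.1 (Nat.le_zero.1 hA)
      subst hAe
      exact ⟨∅, subset_rfl, fun y => rfl, by simp⟩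
  | succ n ih =>
      intro A hA
      by_cases h0 : Dn u v A = 0
      · refine ⟨A, subset_rfl, ?_, by omega⟩
        have hle : ∀ y, cnt u A y ≤ cnt v A y := by
          intro y
          have := (Finset.sum_eq_zero_iff.1 h0) y (Finset.mem_univ y)
          omega
        intro y
        by_contra hne
        have h1 : cnt u A y < cnt v A y := lt_of_le_of_ne (hle y) hne
        have h2 := Finset.sum_lt_sum (fun i (_ : i ∈ Finset.univ) => hle i)
          ⟨y, Finset.mem_univ y, h1⟩
        rw [sum_cnt, sum_cnt] at h2
        omega
      · obtain ⟨x₀, -, hx₀'⟩ := Finset.exists_ne_zero_of_sum_ne_zero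
          (show ∑ y : U, (cnt u A y - cnt v A y) ≠ 0 from h0)
        have hx₀ : cnt v A x₀ < cnt u A x₀ := by omega
        rcases walk A x₀ hx₀ (Fintype.card U) [] x₀ (by simp) (by simp) (by simp)
            (by simp) (by simp) rfl (le_of_lt hx₀) (by simp) with
          ⟨B, hBA, hBc, hBlt⟩ | ⟨C, hCA, hCne, hCbal⟩
        · have hne : A \ B ≠ A := fun h => by rw [h] at hBlt; omega
          have hlt : (A \ B).card < A.card :=
            Finset.card_lt_card (lt_of_le_of_ne Finset.sdiff_subset hne)
          obtain ⟨S, hSsub, hSbal, hScard⟩ := ih (A \ B) (by omega)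
          refine ⟨S, hSsub.trans Finset.sdiff_subset, hSbal, ?_⟩
          have h1 : A.card ≤ (A \ B).card + B.card := Finset.card_le_card_sdiff_add_card
          have h2 : (Fintype.card U - 1) * Dn u v (A \ B) + (Fintype.card U - 1)
              ≤ (Fintype.card U - 1) * Dn u v A := by
            have h3 := Nat.mul_le_mul_left (Fintype.card U - 1)
              (show Dn u v (A \ B) + 1 ≤ Dn u v A by omega)
            calc (Fintype.card U - 1) * Dn u v (A \ B) + (Fintype.card U - 1)
                = (Fintype.card U - 1) * (Dn u v (A \ B) + 1) := by ring
              _ ≤ (Fintype.card U - 1) * Dn u v A := h3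
          calc A.card ≤ (A \ B).card + B.card := h1
            _ ≤ (S.card + (Fintype.card U - 1) * Dn u v (A \ B)) + B.card :=
                Nat.add_le_add_right hScard _
            _ ≤ (S.card + (Fintype.card U - 1) * Dn u v (A \ B)) + (Fintype.card U - 1) :=
                Nat.add_le_add_left (by omega) _
            _ = S.card + ((Fintype.card U - 1) * Dn u v (A \ B) + (Fintype.card U - 1)) :=
                Nat.add_assoc _ _ _
            _ ≤ S.card + (Fintype.card U - 1) * Dn u v A := Nat.add_le_add_left h2 _
        · have hDn : Dn u v (A \ C) = Dn u v A := Dn_sdiff_balanced hCA hCbal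
          have hcard : (A \ C).card + C.card = A.card := Finset.card_sdiff_add_card_eq_card hCA
          have hClt : 0 < C.card := Finset.card_pos.2 hCne
          obtain ⟨S', hS'sub, hS'bal, hS'card⟩ := ih (A \ C) (by omega)
          have hdisj : Disjoint S' C :=
            Finset.disjoint_of_subset_left hS'sub Finset.sdiff_disjoint
          have hcnt : ∀ (w : Fin K → U) (y : U),
              cnt w (S' ∪ C) y = cnt w S' y + cnt w C y := by
            intro w y
            rw [cnt, Finset.filter_union, Finset.card_union_of_disjoint
              (Finset.disjoint_filter_filter hdisj)]
            rfl
          refine ⟨S' ∪ C, Finset.union_subset (hS'sub.trans Finset.sdiff_subset) hCA, ?_, ?_⟩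
          · intro y
            rw [hcnt u y, hcnt v y, hS'bal y, hCbal y]
          · rw [Finset.card_union_of_disjoint hdisj]
            rw [hDn] at hS'card
            omega

lemma exists_perm_comp {α β : Type*} [Fintype α] [DecidableEq β] (f g : α → β)
    (h : ∀ y, Fintype.card {a // f a = y} = Fintype.card {a // g a = y}) :
    ∃ σ : Equiv.Perm α, ∀ a, f (σ a) = g a := by
  classical
  have e : ∀ y, {a // g a = y} ≃ {a // f a = y} := fun y => Fintype.equivOfCardEq (h y).symm
  refine ⟨(Equiv.sigmaFiberEquiv g).symm.trans
    ((Equiv.sigmaCongrRight e).trans (Equiv.sigmaFiberEquiv f)), fun a => ?_⟩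
  have h1 : ((Equiv.sigmaFiberEquiv g).symm.trans
      ((Equiv.sigmaCongrRight e).trans (Equiv.sigmaFiberEquiv f))) a
      = ↑(e (g a) ⟨a, rfl⟩) := rfl
  rw [h1]
  exact (e (g a) ⟨a, rfl⟩).2

lemma balanced_perm (S : Finset (Fin K)) (hbal : ∀ y, cnt u S y = cnt v S y) :
    ∃ π : Equiv.Perm (Fin K), (∀ k ∉ S, π k = k) ∧ ∀ k ∈ S, v k = u (π k) := by
  classical
  have key : ∀ (w : Fin K → U) (y : U),
      Fintype.card {a : {k // k ∈ S} // w ↑a = y} = cnt w S y := by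
    intro w y
    rw [Fintype.card_congr (Equiv.subtypeSubtypeEquivSubtypeInter (· ∈ S) (fun k => w k = y))]
    rw [Fintype.card_subtype, cnt, ← Finset.filter_filter, Finset.filter_univ_mem]
  obtain ⟨σ, hσ⟩ := exists_perm_comp (fun a : {k // k ∈ S} => u ↑a) (fun a => v ↑a)
    (fun y => by rw [key u y, key v y, hbal y])
  refine ⟨σ.extendDomain (Equiv.refl {k // k ∈ S}), ?_, ?_⟩
  · intro k hk
    exact Equiv.Perm.extendDomain_apply_not_subtype σ (Equiv.refl _) hk
  · intro k hk
    rw [Equiv.Perm.extendDomain_apply_subtype σ (Equiv.refl _) hk]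
    exact (hσ ⟨k, hk⟩).symm

end Dev

theorem stmt0 {U : Type*} [Fintype U] [DecidableEq U] [Nonempty U] {K : ℕ} (hK : 0 < K)
    (u v : Fin K → U) :
    ∃ (S : Finset (Fin K)) (π : Equiv.Perm (Fin K)),
      (∀ k ∉ S, π k = k) ∧
      (∀ k ∈ S, v k = u (π k)) ∧
      (K : ℚ) - (Fintype.card U - 1) * K * tv (marg u) (marg v) ≤ (S.card : ℚ) := by
  classical
  have hU : 1 ≤ Fintype.card U := Fintype.card_pos
  obtain ⟨S, hSuniv, hSbal, hScard⟩ :=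
    main_lemma (u := u) (v := v) hU (Finset.univ : Finset (Fin K)).card Finset.univ le_rfl
  obtain ⟨π, hπ1, hπ2⟩ := balanced_perm S hSbal
  refine ⟨S, π, hπ1, hπ2, ?_⟩
  have hK0 : (K : ℚ) ≠ 0 := Nat.cast_ne_zero.2 hK.ne'
  have htv : (K : ℚ) * tv (marg u) (marg v) = (Dn u v Finset.univ : ℚ) := by
    have hterm : ∀ x, max (marg u x - marg v x) 0
        = ((cnt u Finset.univ x - cnt v Finset.univ x : ℕ) : ℚ) / K := by
      intro x
      rw [marg, marg, div_sub_div_same, show (0:ℚ) = 0 / (K:ℚ) by rw [zero_div],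
        max_div_div_right (by positivity : (0:ℚ) ≤ (K:ℚ))]
      congr 1
      rcases le_total (cnt v Finset.univ x) (cnt u Finset.univ x) with h | h
      · rw [Nat.cast_sub h, max_eq_left (by
          have := Nat.cast_le (α := ℚ).2 h
          unfold cnt at this
          linarith)]
        rfl
      · rw [Nat.sub_eq_zero_of_le h, max_eq_right (by
          have := Nat.cast_le (α := ℚ).2 h
          unfold cnt at this
          linarith)]
        simp
    rw [tv, Finset.sum_congr rfl (fun x _ => hterm x), ← Finset.sum_div, Dn, Nat.cast_sum]
    field_simp
  have hcQ : (K : ℚ) ≤ (S.card : ℚ) + ((Fintype.card U : ℚ) - 1) * (Dn u v Finset.univ : ℚ) := by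
    have h1 : K ≤ S.card + (Fintype.card U - 1) * Dn u v Finset.univ := by
      have hc : (Finset.univ : Finset (Fin K)).card = K := by simp
      rw [hc] at hScard
      exact hScard
    calc (K : ℚ) ≤ ((S.card + (Fintype.card U - 1) * Dn u v Finset.univ : ℕ) : ℚ) := by
          exact_mod_cast h1
      _ = (S.card : ℚ) + ((Fintype.card U - 1 : ℕ) : ℚ) * (Dn u v Finset.univ : ℚ) := by
          push_cast; ring
      _ = (S.card : ℚ) + ((Fintype.card U : ℚ) - 1) * (Dn u v Finset.univ : ℚ) := by
          rw [Nat.cast_sub hU]; norm_num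
  have hrw : ((Fintype.card U : ℚ) - 1) * (K : ℚ) * tv (marg u) (marg v)
      = ((Fintype.card U : ℚ) - 1) * (Dn u v Finset.univ : ℚ) := by
    rw [mul_assoc, htv]
  linarith [hcQ, hrw]
end

section
/- For any two vectors u, v in U^K, the minimum over all vectors w in U^K with marg w = marg v of the number of coordinates k where w_k ≠ u_k equals K · d(marg u, marg v), where d is the total variation distance (sum of positive parts of differences) on empirical distributions. -/
open Finset

/-!
Write `c_w x` for the number of coordinates of `w` equal to `x`; then `K · d(marg u, marg v)` is
the total excess `∑ₓ (c_u x - c_v x)⁺`. If `w` has the counts of `v`, at most `c_v x` of the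
`c_u x` coordinates where `u` equals `x` can agree with `w`, so `w` differs from `u` in at least
the total excess. Conversely, as long as `u` has an excess value `x`, it also has a deficient
value `y`; changing one coordinate of `u` from `x` to `y` lowers the total excess by one, and
when no excess is left, `u` has the counts of `v`.
-/

section

variable {U : Type*} [DecidableEq U] {K : ℕ}

def fiberCard (w : Fin K → U) (x : U) : ℕ := #{k | w k = x}

theorem marg_eq_div_fiberCard [Fintype U] (w : Fin K → U) (x : U) :
    marg w x = fiberCard w x / K := rfl

theorem sum_fiberCard [Fintype U] (w : Fin K → U) : ∑ x, fiberCard w x = K := by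
  simpa [fiberCard] using
    (card_eq_sum_card_fiberwise (f := w) (s := univ) (t := univ) (by simp)).symm

theorem marg_eq_marg_iff [Fintype U] {w v : Fin K → U} :
    marg w = marg v ↔ fiberCard w = fiberCard v := by
  rcases K.eq_zero_or_pos with rfl | hK
  · simp [Subsingleton.elim w v]
  · have hKQ : (K : ℚ) ≠ 0 := by positivity
    simp only [funext_iff, marg_eq_div_fiberCard, div_left_inj' hKQ, Nat.cast_inj]

theorem natCast_mul_tv_marg [Fintype U] (u v : Fin K → U) :
    (K : ℚ) * tv (marg u) (marg v) = ∑ x, (fiberCard u x - fiberCard v x : ℕ) := by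
  rcases K.eq_zero_or_pos with rfl | hK
  · simp [fiberCard]
  rw [tv, mul_sum, Nat.cast_sum]
  refine sum_congr rfl fun x _ => ?_
  rw [mul_max_of_nonneg _ _ (Nat.cast_nonneg K), mul_zero, marg_eq_div_fiberCard,
    marg_eq_div_fiberCard, ← sub_div, mul_div_cancel₀ _ (by positivity)]
  rcases le_total (fiberCard v x) (fiberCard u x) with h | h
  · simp [Nat.cast_sub h, h]
  · simp [Nat.sub_eq_zero_of_le h, h]

theorem fiberCard_le_card_ne_add (u w : Fin K → U) (x : U) :
    fiberCard u x ≤ #{k | w k ≠ u k ∧ u k = x} + fiberCard w x :=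
  calc fiberCard u x
      ≤ #(({k | w k ≠ u k ∧ u k = x} : Finset _) ∪ ({k | w k = x} : Finset _)) := by
        refine card_le_card fun k hk => ?_
        simp only [mem_filter, mem_union, mem_univ, true_and] at hk ⊢
        by_cases hwu : w k = u k
        · exact Or.inr (hwu.trans hk)
        · exact Or.inl ⟨hwu, hk⟩
    _ ≤ _ := card_union_le _ _

theorem sum_tsub_fiberCard_le_card_ne [Fintype U] (u w : Fin K → U) :
    ∑ x, (fiberCard u x - fiberCard w x) ≤ #{k | w k ≠ u k} := by
  rw [card_eq_sum_card_fiberwise (f := u) (t := univ) fun _ _ => mem_univ _]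
  refine sum_le_sum fun x _ => ?_
  rw [filter_filter]
  exact tsub_le_iff_right.2 (fiberCard_le_card_ne_add u w x)

theorem fiberCard_update_add (u : Fin K → U) (k : Fin K) (y z : U) :
    fiberCard (Function.update u k y) z + (if u k = z then 1 else 0)
      = fiberCard u z + (if y = z then 1 else 0) := by
  simp only [fiberCard, card_filter, Function.apply_update (fun _ a => if a = z then 1 else 0),
    sum_update_of_mem (mem_univ k)]
  rw [sum_eq_add_sum_sdiff_singleton_of_mem (mem_univ k)]
  ring

theorem sum_tsub_fiberCard_update [Fintype U] {u v : Fin K → U} {k : Fin K} {y : U}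
    (hx : fiberCard v (u k) < fiberCard u (u k)) (hy : fiberCard u y < fiberCard v y) :
    ∑ z, (fiberCard (Function.update u k y) z - fiberCard v z) + 1
      = ∑ z, (fiberCard u z - fiberCard v z) := by
  have hpoint (z : U) : (fiberCard (Function.update u k y) z - fiberCard v z)
      + (if u k = z then 1 else 0) = fiberCard u z - fiberCard v z := by
    have := fiberCard_update_add u k y z
    split_ifs at this ⊢ <;> subst_vars <;> omega
  calc _ = ∑ z, ((fiberCard (Function.update u k y) z - fiberCard v z)
          + if u k = z then 1 else 0) := by simp [sum_add_distrib]
    _ = _ := sum_congr rfl fun z _ => hpoint z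

theorem card_ne_le_card_ne_update_add (u w : Fin K → U) (k : Fin K) (y : U) :
    #{i | w i ≠ u i} ≤ #{i | w i ≠ Function.update u k y i} + 1 := by
  refine (card_le_card fun i hi => ?_).trans (card_insert_le k _)
  rcases eq_or_ne i k with rfl | hik
  · exact mem_insert_self _ _
  · simpa [hik] using hi

theorem exists_fiberCard_eq_card_ne_le [Fintype U] (u v : Fin K → U) :
    ∃ w, fiberCard w = fiberCard v ∧
      #{k | w k ≠ u k} ≤ ∑ x, (fiberCard u x - fiberCard v x) := by
  by_cases hle : ∀ x, fiberCard u x ≤ fiberCard v x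
  · refine ⟨u, funext fun x => ?_, by simp⟩
    have hsum : ∑ x, fiberCard u x = ∑ x, fiberCard v x := by rw [sum_fiberCard, sum_fiberCard]
    exact (sum_eq_sum_iff_of_le fun x _ => hle x).1 hsum x (mem_univ x)
  obtain ⟨x, hx⟩ : ∃ x, fiberCard v x < fiberCard u x := by simpa using hle
  obtain ⟨y, hy⟩ : ∃ y, fiberCard u y < fiberCard v y := by
    by_contra! hge
    have := sum_lt_sum (s := univ) (fun y _ => hge y) ⟨x, mem_univ x, hx⟩
    rw [sum_fiberCard, sum_fiberCard] at this
    exact lt_irrefl K this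
  obtain ⟨k, rfl⟩ : ∃ k, u k = x := by
    simpa [fiberCard, card_pos, filter_nonempty_iff] using hx.bot_lt
  have hdec := sum_tsub_fiberCard_update hx hy
  obtain ⟨w, hw, hcard⟩ := exists_fiberCard_eq_card_ne_le (Function.update u k y) v
  exact ⟨w, hw, (card_ne_le_card_ne_update_add u w k y).trans (by omega)⟩
termination_by ∑ x, (fiberCard u x - fiberCard v x)
decreasing_by omega

end

theorem stmt1_general {U : Type*} [Fintype U] [DecidableEq U] {K : ℕ}
    (u v : Fin K → U) :
    IsLeast {n : ℚ | ∃ w : Fin K → U, marg w = marg v ∧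
        n = ((Finset.univ.filter fun k => w k ≠ u k).card : ℚ)}
      ((K : ℚ) * tv (marg u) (marg v)) := by
  rw [natCast_mul_tv_marg]
  obtain ⟨w, hw, hcard⟩ := exists_fiberCard_eq_card_ne_le u v
  refine ⟨⟨w, marg_eq_marg_iff.2 hw, ?_⟩, ?_⟩
  · have hlow := sum_tsub_fiberCard_le_card_ne u w
    rw [hw] at hlow
    exact_mod_cast (le_antisymm hcard hlow).symm
  · rintro _ ⟨w', hw', rfl⟩
    have hlow := sum_tsub_fiberCard_le_card_ne u w'
    rw [marg_eq_marg_iff.1 hw'] at hlow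
    exact_mod_cast hlow

/-- The minimal number of lies needed to report a vector with the same marginal
as `v` equals `K · d(marg u, marg v)`. -/
theorem stmt1 {U : Type*} [Fintype U] [DecidableEq U] [Nonempty U] {K : ℕ} (hK : 0 < K)
    (u v : Fin K → U) :
    IsLeast {n : ℚ | ∃ w : Fin K → U, marg w = marg v ∧
        n = ((Finset.univ.filter fun k => w k ≠ u k).card : ℚ)}
      ((K : ℚ) * tv (marg u) (marg v)) :=
  stmt1_general u v
end

section
/- Suppose σ : U^K → U^K is permutation-truthful: for all u and all subsets S of {1,...,K}, if there is a bijection π on S with (σ u)_k = u_{π(k)} for all k in S, then (σ u)_k = u_k for all k in S. Then σ is approximately truthful*: for all u, #{k : (σ u)_k ≠ u_k} ≤ (#U − 1) · K · d(marg u, marg (σ u)). -/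
open Finset

set_option linter.unusedSectionVars false
section Aux

variable {U : Type*} [Fintype U] [DecidableEq U] {K : ℕ}

lemma pt_no_inj_cycle (u v : Fin K → U)
    (hpt : ∀ (S : Finset (Fin K)) (π : Equiv.Perm (Fin K)),
      (∀ k ∉ S, π k = k) → (∀ k ∈ S, v k = u (π k)) → ∀ k ∈ S, v k = u k)
    (m : ℕ) (hm : 0 < m) (g : ℕ → Fin K)
    (hinj : ∀ i j, i < m → j < m → g i = g j → i = j)
    (hc : ∀ i < m, v (g i) = u (g ((i + 1) % m)))
    (hd : ∀ i < m, v (g i) ≠ u (g i)) : False := by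
  set L : List (Fin K) := (List.range m).map g with hL
  have hlen : L.length = m := by simp [hL]
  have hget : ∀ (i : ℕ) (h : i < L.length), L[i] = g i := by
    intro i h
    simp [hL]
  have hnd : L.Nodup := by
    refine List.Nodup.map_on ?_ List.nodup_range 
    intro i hi j hj hij
    exact hinj i j (List.mem_range.mp hi) (List.mem_range.mp hj) hij
  have hfix : ∀ k ∉ L.toFinset, L.formPerm k = k := by
    intro k hk
    exact List.formPerm_apply_of_notMem (by simpa using hk)
  have hstep : ∀ k ∈ L.toFinset, v k = u (L.formPerm k) := by
    intro k hk
    obtain ⟨i, hi, rfl⟩ := List.mem_iff_getElem.mp (List.mem_toFinset.mp hk)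
    rw [List.formPerm_apply_getElem _ hnd i hi, hget, hget]
    rw [hlen]
    exact hc i (hlen ▸ hi)
  have h0 : g 0 ∈ L.toFinset := by
    rw [List.mem_toFinset]
    have : L[0]'(by omega) = g 0 := hget 0 (by omega)
    exact this ▸ List.getElem_mem _
  exact hd 0 hm (hpt L.toFinset L.formPerm hfix hstep (g 0) h0)

lemma pt_no_cycle (u v : Fin K → U)
    (hpt : ∀ (S : Finset (Fin K)) (π : Equiv.Perm (Fin K)),
      (∀ k ∉ S, π k = k) → (∀ k ∈ S, v k = u (π k)) → ∀ k ∈ S, v k = u k) :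
    ∀ (m : ℕ), 0 < m → ∀ (g : ℕ → Fin K),
    (∀ i < m, v (g i) = u (g ((i + 1) % m))) →
    (∀ i < m, v (g i) ≠ u (g i)) → False := by
  intro m
  induction m using Nat.strong_induction_on with
  | _ m ih =>
    intro hm g hc hd
    by_cases hinj : ∀ i j, i < m → j < m → g i = g j → i = j
    · exact pt_no_inj_cycle u v hpt m hm g hinj hc hd
    · push_neg at hinj
      obtain ⟨i, j, hi, hj, heq, hne⟩ := hinj
      have key : ∀ i j, i < j → j < m → g i = g j → False := by
        intro i j hij hjm hgij
        refine ih (j - i) (by omega) (by omega) (fun a => g (i + a)) ?_ ?_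
        · intro a ha
          by_cases h1 : a + 1 < j - i
          · rw [Nat.mod_eq_of_lt h1]
            have h2 := hc (i + a) (by omega)
            rw [Nat.mod_eq_of_lt (by omega)] at h2
            show v (g (i + a)) = u (g (i + (a + 1)))
            rw [show i + (a + 1) = i + a + 1 by omega]
            exact h2
          · have ha1 : a + 1 = j - i := by omega
            rw [ha1, Nat.mod_self]
            have h2 := hc (j - 1) (by omega)
            rw [Nat.mod_eq_of_lt (by omega), show j - 1 + 1 = j by omega, ← hgij] at h2
            show v (g (i + a)) = u (g (i + 0))
            rw [show i + a = j - 1 by omega, show i + 0 = i by omega]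
            exact h2
        · intro a ha
          exact hd (i + a) (by omega)
      rcases Nat.lt_or_ge i j with h | h
      · exact key i j h hj heq
      · exact key j i (by omega) hi heq.symm

def EdgeRel (u v : Fin K → U) : U → U → Prop :=
  fun x y => ∃ k, v k ≠ u k ∧ u k = x ∧ v k = y

lemma pt_path_of_transGen (u v : Fin K → U) {x y : U}
    (h : Relation.TransGen (EdgeRel u v) x y) :
    ∃ m, 0 < m ∧ ∃ g : ℕ → Fin K, u (g 0) = x ∧ v (g (m - 1)) = y ∧
      (∀ i < m, v (g i) ≠ u (g i)) ∧ (∀ i, i + 1 < m → v (g i) = u (g (i + 1))) := by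
  induction h with
  | single hr =>
    obtain ⟨k, hk, hku, hkv⟩ := hr
    exact ⟨1, one_pos, fun _ => k, hku, hkv, fun i _ => hk, fun i hi => by omega⟩
  | tail hxy hr ih =>
    obtain ⟨m, hm, g, hg0, hgl, hgd, hgc⟩ := ih
    obtain ⟨k, hk, hku, hkv⟩ := hr
    refine ⟨m + 1, by omega, fun i => if i < m then g i else k, ?_, ?_, ?_, ?_⟩
    · simpa [hm] using hg0
    · simp [hkv]
    · intro i hi
      by_cases h1 : i < m
      · simpa [h1] using hgd i h1
      · simpa [h1] using hk
    · intro i hi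
      by_cases h1 : i + 1 < m
      · have h3 : i < m := by omega
        simpa [h1, h3] using hgc i h1
      · have h2 : i + 1 = m := by omega
        have h3 : i < m := by omega
        simp only [if_pos h3, if_neg (by omega : ¬ (i+1) < m)]
        rw [hku, show i = m - 1 by omega, hgl]

lemma pt_transGen_irrefl (u v : Fin K → U)
    (hpt : ∀ (S : Finset (Fin K)) (π : Equiv.Perm (Fin K)),
      (∀ k ∉ S, π k = k) → (∀ k ∈ S, v k = u (π k)) → ∀ k ∈ S, v k = u k)
    (x : U) : ¬ Relation.TransGen (EdgeRel u v) x x := by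
  intro h
  obtain ⟨m, hm, g, hg0, hgl, hgd, hgc⟩ := pt_path_of_transGen u v h
  apply pt_no_cycle u v hpt m hm g _ hgd
  intro i hi
  by_cases h1 : i + 1 < m
  · rw [Nat.mod_eq_of_lt h1]; exact hgc i h1
  · have h2 : i + 1 = m := by omega
    rw [h2, Nat.mod_self, show i = m - 1 by omega, hgl, hg0]

open scoped Classical in
noncomputable def ptrank (u v : Fin K → U) (x : U) : ℕ :=
  (univ.filter fun y => Relation.TransGen (EdgeRel u v) y x).card

lemma pt_rank_lt (u v : Fin K → U)
    (hpt : ∀ (S : Finset (Fin K)) (π : Equiv.Perm (Fin K)),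
      (∀ k ∉ S, π k = k) → (∀ k ∈ S, v k = u (π k)) → ∀ k ∈ S, v k = u k)
    {x y : U} (hr : EdgeRel u v x y) : ptrank u v x < ptrank u v y := by
  classical
  apply Finset.card_lt_card
  constructor
  · intro z hz
    simp only [Finset.mem_filter, Finset.mem_univ, true_and] at hz ⊢
    exact hz.tail hr
  · intro hsub
    have hx : x ∈ univ.filter fun z => Relation.TransGen (EdgeRel u v) z y := by
      simp only [Finset.mem_filter, Finset.mem_univ, true_and]
      exact Relation.TransGen.single hr
    have := hsub hx
    simp only [Finset.mem_filter, Finset.mem_univ, true_and] at this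
    exact pt_transGen_irrefl u v hpt x this

lemma pt_rank_le (u v : Fin K → U)
    (hpt : ∀ (S : Finset (Fin K)) (π : Equiv.Perm (Fin K)),
      (∀ k ∉ S, π k = k) → (∀ k ∈ S, v k = u (π k)) → ∀ k ∈ S, v k = u k)
    (x : U) : ptrank u v x ≤ Fintype.card U - 1 := by
  classical
  have hsub : (univ.filter fun y => Relation.TransGen (EdgeRel u v) y x) ⊆ univ.erase x := by
    intro z hz
    simp only [Finset.mem_filter, Finset.mem_univ, true_and] at hz
    refine Finset.mem_erase.mpr ⟨?_, Finset.mem_univ z⟩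
    rintro rfl
    exact pt_transGen_irrefl u v hpt z hz
  calc ptrank u v x ≤ (univ.erase x).card := by
        unfold ptrank
        exact Finset.card_le_card (by convert hsub)
    _ = Fintype.card U - 1 := by rw [Finset.card_erase_of_mem (Finset.mem_univ x), Finset.card_univ]

end Aux


/-- Permutation-truthful strategies are approximately truthful*. -/
theorem stmt6 {U : Type*} [Fintype U] [DecidableEq U] [Nonempty U] {K : ℕ} (hK : 0 < K)
    (σ : (Fin K → U) → (Fin K → U))
    (hpt : ∀ (u : Fin K → U) (S : Finset (Fin K)) (π : Equiv.Perm (Fin K)),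
      (∀ k ∉ S, π k = k) → (∀ k ∈ S, σ u k = u (π k)) → ∀ k ∈ S, σ u k = u k) :
    ∀ u : Fin K → U,
      ((Finset.univ.filter fun k => σ u k ≠ u k).card : ℚ) ≤
        (Fintype.card U - 1) * K * tv (marg u) (marg (σ u)) := by
  classical
  intro u
  set v := σ u with hv
  have hpt' : ∀ (S : Finset (Fin K)) (π : Equiv.Perm (Fin K)),
      (∀ k ∉ S, π k = k) → (∀ k ∈ S, v k = u (π k)) → ∀ k ∈ S, v k = u k :=
    fun S π h1 h2 => hpt u S π h1 h2
  have hc1 : 1 ≤ Fintype.card U := Fintype.card_pos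
  have hn1 : (1:ℚ) ≤ (Fintype.card U : ℚ) := by exact_mod_cast hc1
  have hKQ : (0:ℚ) < (K:ℚ) := by exact_mod_cast hK
  have hrle : ∀ x, (ptrank u v x : ℚ) ≤ (Fintype.card U : ℚ) - 1 := by
    intro x
    have h1 := pt_rank_le u v hpt' x
    have h3 : (ptrank u v x : ℚ) ≤ ((Fintype.card U - 1 : ℕ) : ℚ) := by exact_mod_cast h1
    rwa [Nat.cast_sub hc1, Nat.cast_one] at h3
  have cardeq : ∀ (w : Fin K → U) (x : U),
      ((univ.filter fun k => w k = x).card : ℚ) = K * marg w x := by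
    intro w x; unfold marg; field_simp
  have comp : ∀ (w : Fin K → U) (f : U → ℚ),
      ∑ k : Fin K, f (w k) = ∑ x : U, ((univ.filter fun k => w k = x).card : ℚ) * f x := by
    intro w f
    rw [← Finset.sum_fiberwise_of_maps_to (fun k _ => Finset.mem_univ (w k)) (fun k => f (w k))]
    refine Finset.sum_congr rfl fun x _ => ?_
    rw [Finset.sum_congr rfl (fun k hk => by rw [(Finset.mem_filter.mp hk).2]),
      Finset.sum_const, nsmul_eq_mul]
  have margsum : ∀ (w : Fin K → U), ∑ x : U, marg w x = 1 := by
    intro w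
    have := comp w (fun _ => (1:ℚ))
    simp only [mul_one] at this
    unfold marg
    rw [← Finset.sum_div, ← this]
    simp [hKQ.ne']
  set D := univ.filter fun k => v k ≠ u k with hD
  have step1 : (D.card : ℚ) ≤ ∑ k ∈ D, ((ptrank u v (v k) : ℚ) - ptrank u v (u k)) := by
    have h0 : (D.card : ℚ) = ∑ k ∈ D, (1:ℚ) := by simp
    rw [h0]
    refine Finset.sum_le_sum fun k hk => ?_
    have hkd : v k ≠ u k := (Finset.mem_filter.mp hk).2
    have hlt := pt_rank_lt u v hpt' ⟨k, hkd, rfl, rfl⟩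
    have hlt' : (ptrank u v (u k) : ℚ) + 1 ≤ (ptrank u v (v k) : ℚ) := by exact_mod_cast hlt
    linarith
  have step2 : ∑ k ∈ D, ((ptrank u v (v k) : ℚ) - ptrank u v (u k)) =
      ∑ k : Fin K, ((ptrank u v (v k) : ℚ) - ptrank u v (u k)) := by
    refine Finset.sum_subset (Finset.subset_univ D) fun k _ hk => ?_
    have : v k = u k := by simpa [hD] using hk
    rw [this, sub_self]
  have step3 : ∑ k : Fin K, ((ptrank u v (v k) : ℚ) - ptrank u v (u k)) =
      ∑ x : U, (K * (marg v x - marg u x)) * (ptrank u v x : ℚ) := by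
    rw [Finset.sum_sub_distrib, comp v (fun x => (ptrank u v x : ℚ)),
      comp u (fun x => (ptrank u v x : ℚ)), ← Finset.sum_sub_distrib]
    refine Finset.sum_congr rfl fun x _ => ?_
    rw [cardeq, cardeq]; ring
  have step4 : ∑ x : U, (K * (marg v x - marg u x)) * (ptrank u v x : ℚ) ≤
      ∑ x : U, ((K:ℚ) * ((Fintype.card U : ℚ) - 1)) * max (marg v x - marg u x) 0 := by
    refine Finset.sum_le_sum fun x _ => ?_
    have hr0 : (0:ℚ) ≤ (ptrank u v x : ℚ) := by positivity
    have hrx := hrle x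
    rcases le_total (marg v x - marg u x) 0 with h | h
    · have hmax : max (marg v x - marg u x) 0 = 0 := max_eq_right h
      rw [hmax, mul_zero]
      exact mul_nonpos_of_nonpos_of_nonneg (by nlinarith) hr0
    · have hmax : max (marg v x - marg u x) 0 = marg v x - marg u x := max_eq_left h
      rw [hmax]
      calc (K:ℚ) * (marg v x - marg u x) * (ptrank u v x : ℚ)
          ≤ (K:ℚ) * (marg v x - marg u x) * ((Fintype.card U : ℚ) - 1) :=
            mul_le_mul_of_nonneg_left hrx (mul_nonneg hKQ.le h)
        _ = ((K:ℚ) * ((Fintype.card U : ℚ) - 1)) * (marg v x - marg u x) := by ring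
  have step5 : ∑ x : U, max (marg v x - marg u x) 0 = tv (marg u) (marg v) := by
    have hzero : ∑ x : U, (marg v x - marg u x) = 0 := by
      rw [Finset.sum_sub_distrib, margsum, margsum, sub_self]
    unfold tv
    have key : ∀ x : U, max (marg u x - marg v x) 0 =
        max (marg v x - marg u x) 0 - (marg v x - marg u x) := by
      intro x
      have h1 := max_zero_sub_max_neg_zero_eq_self (marg v x - marg u x)
      rw [show marg u x - marg v x = -(marg v x - marg u x) by ring]
      linarith
    rw [Finset.sum_congr rfl fun x _ => key x, Finset.sum_sub_distrib, hzero, sub_zero]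
  calc (D.card : ℚ) ≤ ∑ k ∈ D, ((ptrank u v (v k) : ℚ) - ptrank u v (u k)) := step1
    _ = ∑ x : U, (K * (marg v x - marg u x)) * (ptrank u v x : ℚ) := by rw [step2, step3]
    _ ≤ ∑ x : U, ((K:ℚ) * ((Fintype.card U : ℚ) - 1)) * max (marg v x - marg u x) 0 := step4
    _ = ((K:ℚ) * ((Fintype.card U : ℚ) - 1)) * ∑ x : U, max (marg v x - marg u x) 0 := by
        rw [← Finset.mul_sum]
    _ = ((Fintype.card U : ℚ) - 1) * K * tv (marg u) (marg v) := by rw [step5]; ring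
end
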